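/- arXiv:2507.14576 — 3 statements merged into one kernel-verified Lean document; each statement's English description precedes it below -/
import Mathlib

section
/- Fix x ∈ ℝ and t > 0, and set A = x − U₀·τ(1 − e^{−t/τ}) + (M/2)·(τ² − τ²e^{−t/τ} − τt) and B = x + U₀·τ(1 − e^{−t/τ}) − (M/2)·(τ² − τ²e^{−t/τ} − τt). Then A ≤ B; F(·;x,t) is nonincreasing on (−∞,A] (i.e. F(y₁;x,t) ≥ F(y₂;x,t) whenever y₁ ≤ y₂ ≤ A) and nondecreasing on [B,∞) (i.e. F(y₁;x,t) ≤ F(y₂;x,t) whenever B ≤ y₁ ≤ y₂); consequently inf_{y∈ℝ} F(y;x,t) = inf_{y∈[A,B]} F(y;x,t) > −∞. -/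
open MeasureTheory Set Filter Topology

noncomputable def Mtot (ρ : Measure ℝ) : ℝ := (ρ Set.univ).toReal

noncomputable def m0 (ρ : Measure ℝ) (y : ℝ) : ℝ := (ρ (Set.Iio y)).toReal

noncomputable def m0p (ρ : Measure ℝ) (y : ℝ) : ℝ := (ρ (Set.Iic y)).toReal

/-- `m̃₀(y) = (1/2)(ρ((−∞,y)) + ρ((−∞,y]) − M)`. -/
noncomputable def mtilde (ρ : Measure ℝ) (y : ℝ) : ℝ :=
  (m0 ρ y + m0p ρ y - Mtot ρ) / 2

/-- topological support of the measure. -/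
def msupp (ρ : Measure ℝ) : Set ℝ := {x | ∀ U ∈ nhds x, 0 < ρ U}

/-- The generalized potential `F(y;x,t)`. -/
noncomputable def Fpot (ρ : Measure ℝ) (u₀ : ℝ → ℝ) (τ y x t : ℝ) : ℝ :=
  ∫ η in Set.Iio y,
    (η + u₀ η * (τ * (1 - Real.exp (-t / τ)))
       + mtilde ρ η * (τ ^ 2 - τ ^ 2 * Real.exp (-t / τ) - τ * t) - x) ∂ρ

/-- The right-limit value `F(y+;x,t)` (integral over `(−∞,y]`). -/
noncomputable def FpotP (ρ : Measure ℝ) (u₀ : ℝ → ℝ) (τ y x t : ℝ) : ℝ :=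
  ∫ η in Set.Iic y,
    (η + u₀ η * (τ * (1 - Real.exp (-t / τ)))
       + mtilde ρ η * (τ ^ 2 - τ ^ 2 * Real.exp (-t / τ) - τ * t) - x) ∂ρ

/-- `ν(x,t) = inf_y F(y;x,t)`. -/
noncomputable def nuEP (ρ : Measure ℝ) (u₀ : ℝ → ℝ) (τ x t : ℝ) : ℝ :=
  ⨅ y : ℝ, Fpot ρ u₀ τ y x t

/-- `S(x,t)`: points approachable by sequences along which `F` tends to `ν(x,t)`. -/
def Sset (ρ : Measure ℝ) (u₀ : ℝ → ℝ) (τ x t : ℝ) : Set ℝ :=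
  {y | ∃ yn : ℕ → ℝ, Tendsto yn atTop (𝓝 y) ∧
    Tendsto (fun n => Fpot ρ u₀ τ (yn n) x t) atTop (𝓝 (nuEP ρ u₀ τ x t))}

/-- `y_*(x,t) = inf (S(x,t) ∩ supp ρ₀)`. -/
noncomputable def ystar (ρ : Measure ℝ) (u₀ : ℝ → ℝ) (τ x t : ℝ) : ℝ :=
  sInf (Sset ρ u₀ τ x t ∩ msupp ρ)

/-- initial speed `c(y;x,t)` of the characteristic connecting `(y,0)` and `(x,t)`. -/
noncomputable def cspeed (ρ : Measure ℝ) (τ y x t : ℝ) : ℝ :=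
  (x - y) / (τ * (1 - Real.exp (-t / τ)))
    - mtilde ρ y * (τ - t / (1 - Real.exp (-t / τ)))

lemma m0_mono (ρ : Measure ℝ) [IsFiniteMeasure ρ] : Monotone (m0 ρ) := fun _ _ h =>
  ENNReal.toReal_mono (measure_ne_top ρ _) (measure_mono (Set.Iio_subset_Iio h))

lemma m0p_mono (ρ : Measure ℝ) [IsFiniteMeasure ρ] : Monotone (m0p ρ) := fun _ _ h =>
  ENNReal.toReal_mono (measure_ne_top ρ _) (measure_mono (Set.Iic_subset_Iic.mpr h))

lemma mtilde_meas (ρ : Measure ℝ) [IsFiniteMeasure ρ] : Measurable (mtilde ρ) :=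
  (((m0_mono ρ).measurable.add (m0p_mono ρ).measurable).sub measurable_const).div_const 2

lemma mtilde_abs_le (ρ : Measure ℝ) [IsFiniteMeasure ρ] (y : ℝ) :
    |mtilde ρ y| ≤ Mtot ρ / 2 := by
  have h0 : 0 ≤ m0 ρ y := ENNReal.toReal_nonneg
  have h0' : 0 ≤ m0p ρ y := ENNReal.toReal_nonneg
  have h1 : m0 ρ y ≤ Mtot ρ :=
    ENNReal.toReal_mono (measure_ne_top ρ _) (measure_mono (Set.subset_univ _))
  have h2 : m0p ρ y ≤ Mtot ρ :=
    ENNReal.toReal_mono (measure_ne_top ρ _) (measure_mono (Set.subset_univ _))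
  rw [abs_le]
  unfold mtilde
  constructor <;> nlinarith

theorem stmt2 (ρ : Measure ℝ) [IsFiniteMeasure ρ] (u₀ : ℝ → ℝ) (U₀ τ x t : ℝ)
    (hτ : 0 < τ) (ht : 0 < t) (hU₀ : 0 ≤ U₀)
    (hmom : Integrable (fun η : ℝ => η) ρ) (humeas : Measurable u₀)
    (hu : ∀ᵐ η ∂ρ, |u₀ η| ≤ U₀) :
    let A := x - U₀ * (τ * (1 - Real.exp (-t / τ)))
               + Mtot ρ / 2 * (τ ^ 2 - τ ^ 2 * Real.exp (-t / τ) - τ * t)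
    let B := x + U₀ * (τ * (1 - Real.exp (-t / τ)))
               - Mtot ρ / 2 * (τ ^ 2 - τ ^ 2 * Real.exp (-t / τ) - τ * t)
    A ≤ B ∧
    (∀ y₁ y₂ : ℝ, y₁ ≤ y₂ → y₂ ≤ A → Fpot ρ u₀ τ y₂ x t ≤ Fpot ρ u₀ τ y₁ x t) ∧
    (∀ y₁ y₂ : ℝ, B ≤ y₁ → y₁ ≤ y₂ → Fpot ρ u₀ τ y₁ x t ≤ Fpot ρ u₀ τ y₂ x t) ∧
    BddBelow (Set.range fun y => Fpot ρ u₀ τ y x t) ∧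
    (⨅ y : ℝ, Fpot ρ u₀ τ y x t) = sInf ((fun y => Fpot ρ u₀ τ y x t) '' Set.Icc A B) := by
  intro A B
  set L : ℝ := τ * (1 - Real.exp (-t / τ)) with hLdef
  set K : ℝ := τ ^ 2 - τ ^ 2 * Real.exp (-t / τ) - τ * t with hKdef
  have hexp1 : Real.exp (-t / τ) < 1 := by
    rw [Real.exp_lt_one_iff]
    exact div_neg_of_neg_of_pos (neg_neg_of_pos ht) hτ
  have hL : 0 < L := mul_pos hτ (by linarith)
  have hK : K ≤ 0 := by
    have hexp2 : -t / τ + 1 ≤ Real.exp (-t / τ) := Real.add_one_le_exp _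
    have h3 : τ * (-t / τ + 1) ≤ τ * Real.exp (-t / τ) :=
      mul_le_mul_of_nonneg_left hexp2 hτ.le
    have h4 : τ * (-t / τ) = -t := by field_simp
    have h6 : -t + τ ≤ τ * Real.exp (-t / τ) := by
      rw [mul_add, h4, mul_one] at h3; exact h3
    have h5 : τ * (-t + τ) ≤ τ * (τ * Real.exp (-t / τ)) :=
      mul_le_mul_of_nonneg_left h6 hτ.le
    rw [hKdef]
    nlinarith [h5]
  have hM : 0 ≤ Mtot ρ := ENNReal.toReal_nonneg
  have hAB : A ≤ B := by
    have h1 : 0 ≤ U₀ * L := mul_nonneg hU₀ hL.le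
    have h2 : Mtot ρ / 2 * K ≤ 0 := mul_nonpos_of_nonneg_of_nonpos (by linarith) hK
    simp only [A, B, ← hLdef, ← hKdef]; linarith
  set g : ℝ → ℝ := fun η => η + u₀ η * L + mtilde ρ η * K - x with hgdef
  have hFpot : ∀ y : ℝ, Fpot ρ u₀ τ y x t = ∫ η in Set.Iio y, g η ∂ρ := fun y => rfl
  -- integrability
  have hg : Integrable g ρ := by
    have i2 : Integrable (fun η => u₀ η * L) ρ := by
      refine ⟨(humeas.mul_const L).aestronglyMeasurable, ?_⟩
      refine HasFiniteIntegral.of_bounded (C := U₀ * L) ?_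
      filter_upwards [hu] with η hη
      rw [Real.norm_eq_abs, abs_mul, abs_of_pos hL]
      exact mul_le_mul_of_nonneg_right hη hL.le
    have i3 : Integrable (fun η => mtilde ρ η * K) ρ := by
      refine ⟨((mtilde_meas ρ).mul_const K).aestronglyMeasurable, ?_⟩
      refine HasFiniteIntegral.of_bounded (C := Mtot ρ / 2 * |K|) ?_
      refine Eventually.of_forall fun η => ?_
      rw [Real.norm_eq_abs, abs_mul]
      exact mul_le_mul_of_nonneg_right (mtilde_abs_le ρ η) (abs_nonneg _)
    exact ((hmom.add i2).add i3).sub (integrable_const x)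
  -- pointwise a.e. bounds
  have hgle : ∀ᵐ η ∂ρ, g η ≤ η - A := by
    filter_upwards [hu] with η hη
    have h1 : u₀ η * L ≤ U₀ * L :=
      mul_le_mul_of_nonneg_right (le_of_abs_le hη) hL.le
    have h2 : mtilde ρ η * K ≤ -(Mtot ρ / 2) * K :=
      mul_le_mul_of_nonpos_right (neg_le_of_abs_le (mtilde_abs_le ρ η)) hK
    simp only [g, A, ← hLdef, ← hKdef]; linarith
  have hgge : ∀ᵐ η ∂ρ, η - B ≤ g η := by
    filter_upwards [hu] with η hη
    have h1 : -(U₀ * L) ≤ u₀ η * L :=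
      neg_mul U₀ L ▸ mul_le_mul_of_nonneg_right (neg_le_of_abs_le hη) hL.le
    have h2 : Mtot ρ / 2 * K ≤ mtilde ρ η * K :=
      mul_le_mul_of_nonpos_right (le_of_abs_le (mtilde_abs_le ρ η)) hK
    simp only [g, B, ← hLdef, ← hKdef]; linarith
  -- splitting lemma
  have hsplit : ∀ y₁ y₂ : ℝ, y₁ ≤ y₂ →
      Fpot ρ u₀ τ y₂ x t = Fpot ρ u₀ τ y₁ x t + ∫ η in Set.Ico y₁ y₂, g η ∂ρ := by
    intro y₁ y₂ h
    rw [hFpot, hFpot, ← Set.Iio_union_Ico_eq_Iio h,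
      setIntegral_union ((Set.Iio_disjoint_Ici le_rfl).mono_right Set.Ico_subset_Ici_self)
        measurableSet_Ico hg.integrableOn hg.integrableOn]
  have part2 : ∀ y₁ y₂ : ℝ, y₁ ≤ y₂ → y₂ ≤ A → Fpot ρ u₀ τ y₂ x t ≤ Fpot ρ u₀ τ y₁ x t := by
    intro y₁ y₂ h12 h2A
    rw [hsplit y₁ y₂ h12]
    have : (∫ η in Set.Ico y₁ y₂, g η ∂ρ) ≤ 0 := by
      apply integral_nonpos_of_ae
      filter_upwards [ae_restrict_of_ae hgle, ae_restrict_mem measurableSet_Ico] with η h1 h2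
      have := h2.2
      simp only [Pi.zero_apply]; linarith
    linarith
  have part3 : ∀ y₁ y₂ : ℝ, B ≤ y₁ → y₁ ≤ y₂ → Fpot ρ u₀ τ y₁ x t ≤ Fpot ρ u₀ τ y₂ x t := by
    intro y₁ y₂ hB1 h12
    rw [hsplit y₁ y₂ h12]
    have : 0 ≤ ∫ η in Set.Ico y₁ y₂, g η ∂ρ := by
      apply integral_nonneg_of_ae
      filter_upwards [ae_restrict_of_ae hgge, ae_restrict_mem measurableSet_Ico] with η h1 h2
      have := h2.1
      simp only [Pi.zero_apply]; linarith
    linarith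
  -- bounded below
  have hbdd : BddBelow (Set.range fun y => Fpot ρ u₀ τ y x t) := by
    refine ⟨-∫ η, ‖g η‖ ∂ρ, ?_⟩
    rintro v ⟨y, rfl⟩
    have h1 : ‖Fpot ρ u₀ τ y x t‖ ≤ ∫ η in Set.Iio y, ‖g η‖ ∂ρ := by
      rw [hFpot]; exact norm_integral_le_integral_norm _
    have h2 : (∫ η in Set.Iio y, ‖g η‖ ∂ρ) ≤ ∫ η, ‖g η‖ ∂ρ :=
      setIntegral_le_integral hg.norm (Eventually.of_forall fun _ => norm_nonneg _)
    have h3 := neg_abs_le (Fpot ρ u₀ τ y x t)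
    rw [Real.norm_eq_abs] at h1
    linarith
  refine ⟨hAB, part2, part3, hbdd, ?_⟩
  -- infimum equality
  have himg_sub : ((fun y => Fpot ρ u₀ τ y x t) '' Set.Icc A B) ⊆
      Set.range fun y => Fpot ρ u₀ τ y x t := by
    rintro v ⟨y, _, rfl⟩; exact ⟨y, rfl⟩
  have himg_bdd : BddBelow ((fun y => Fpot ρ u₀ τ y x t) '' Set.Icc A B) :=
    hbdd.mono himg_sub
  have himg_ne : ((fun y => Fpot ρ u₀ τ y x t) '' Set.Icc A B).Nonempty :=
    ⟨Fpot ρ u₀ τ A x t, A, ⟨le_rfl, hAB⟩, rfl⟩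
  rw [iInf]
  apply le_antisymm
  · exact csInf_le_csInf hbdd himg_ne himg_sub
  · refine le_csInf ⟨Fpot ρ u₀ τ A x t, A, rfl⟩ ?_
    rintro v ⟨y, rfl⟩
    rcases le_or_gt y A with hyA | hyA
    · calc sInf ((fun y => Fpot ρ u₀ τ y x t) '' Set.Icc A B)
          ≤ Fpot ρ u₀ τ A x t := csInf_le himg_bdd ⟨A, ⟨le_rfl, hAB⟩, rfl⟩
        _ ≤ Fpot ρ u₀ τ y x t := part2 y A hyA le_rfl
    · rcases le_or_gt y B with hyB | hyB
      · exact csInf_le himg_bdd ⟨y, ⟨hyA.le, hyB⟩, rfl⟩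
      · calc sInf ((fun y => Fpot ρ u₀ τ y x t) '' Set.Icc A B)
            ≤ Fpot ρ u₀ τ B x t := csInf_le himg_bdd ⟨B, ⟨hAB, le_rfl⟩, rfl⟩
          _ ≤ Fpot ρ u₀ τ y x t := part3 B y le_rfl hyB.le
end

section
/- Let τ > 0, let 0 < t < t₀, and let y₁ ≤ y₂, a₁ ≤ a₂, x₁ < x₂ be reals. For i = 1,2 set cᵢ = (xᵢ − yᵢ)/(τ(1−e^{−t₀/τ})) − aᵢ·(τ − t₀/(1−e^{−t₀/τ})) and x̄ᵢ(t) = yᵢ + cᵢ·τ(1−e^{−t/τ}) + aᵢ·(τ² − τ²e^{−t/τ} − τt). Then x̄₂(t) − x̄₁(t) = [(e^{−t/τ} − e^{−t₀/τ})/(1 − e^{−t₀/τ})]·(y₂ − y₁) + [(1 − e^{−t/τ})/(1 − e^{−t₀/τ})]·(x₂ − x₁) + [τ/(1 − e^{−t₀/τ})]·(t₀ − t + t·e^{−t₀/τ} − t₀·e^{−t/τ})·(a₂ − a₁), and in particular x̄₂(t) > x̄₁(t). -/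
lemma aux_conv (p q : ℝ) (hp : 0 < p) (hpq : p ≤ q) :
    p * (1 - Real.exp (-q)) ≤ q * (1 - Real.exp (-p)) := by
  have hq : 0 < q := lt_of_lt_of_le hp hpq
  have ha : (0:ℝ) ≤ p / q := by positivity
  have hb : (0:ℝ) ≤ 1 - p / q := by
    have : p / q ≤ 1 := (div_le_one hq).2 hpq
    linarith
  have h := convexOn_exp.2 (Set.mem_univ (-q)) (Set.mem_univ 0) ha hb (by ring)
  simp only [smul_eq_mul, mul_zero, add_zero, Real.exp_zero, mul_one] at h
  have hpq' : p / q * -q = -p := by field_simp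
  rw [hpq'] at h
  have h2 := mul_le_mul_of_nonneg_left h hq.le
  have h3 : q * (p / q * Real.exp (-q) + (1 - p / q)) = p * Real.exp (-q) + (q - p) := by
    field_simp
  nlinarith [h2, h3]

theorem stmt10 (τ t t₀ y₁ y₂ a₁ a₂ x₁ x₂ : ℝ) (hτ : 0 < τ)
    (ht : 0 < t) (ht₀ : t < t₀) (hy : y₁ ≤ y₂) (ha : a₁ ≤ a₂) (hx : x₁ < x₂) :
    let c₁ := (x₁ - y₁) / (τ * (1 - Real.exp (-t₀ / τ)))
                - a₁ * (τ - t₀ / (1 - Real.exp (-t₀ / τ)))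
    let c₂ := (x₂ - y₂) / (τ * (1 - Real.exp (-t₀ / τ)))
                - a₂ * (τ - t₀ / (1 - Real.exp (-t₀ / τ)))
    let X₁ := y₁ + c₁ * (τ * (1 - Real.exp (-t / τ)))
                + a₁ * (τ ^ 2 - τ ^ 2 * Real.exp (-t / τ) - τ * t)
    let X₂ := y₂ + c₂ * (τ * (1 - Real.exp (-t / τ)))
                + a₂ * (τ ^ 2 - τ ^ 2 * Real.exp (-t / τ) - τ * t)
    X₂ - X₁ = (Real.exp (-t / τ) - Real.exp (-t₀ / τ)) / (1 - Real.exp (-t₀ / τ)) * (y₂ - y₁)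
        + (1 - Real.exp (-t / τ)) / (1 - Real.exp (-t₀ / τ)) * (x₂ - x₁)
        + τ / (1 - Real.exp (-t₀ / τ))
            * (t₀ - t + t * Real.exp (-t₀ / τ) - t₀ * Real.exp (-t / τ)) * (a₂ - a₁) ∧
      X₁ < X₂ := by
  intro c₁ c₂ X₁ X₂
  set E := Real.exp (-t / τ) with hE
  set E0 := Real.exp (-t₀ / τ) with hE0
  have hE1 : E < 1 := by
    rw [hE, ← Real.exp_zero]
    apply Real.exp_lt_exp.2
    rw [neg_div]
    simp only [Left.neg_neg_iff]
    positivity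
  have hE0E : E0 < E := Real.exp_lt_exp.2 (by
    rw [div_lt_div_iff₀ hτ hτ]; nlinarith)
  have hD : 0 < 1 - E0 := by nlinarith
  have hDne : (1 - E0) ≠ 0 := ne_of_gt hD
  have hτne : τ ≠ 0 := ne_of_gt hτ
  have hid : X₂ - X₁ = (E - E0) / (1 - E0) * (y₂ - y₁)
      + (1 - E) / (1 - E0) * (x₂ - x₁)
      + τ / (1 - E0) * (t₀ - t + t * E0 - t₀ * E) * (a₂ - a₁) := by
    show (y₂ + c₂ * (τ * (1 - E)) + a₂ * (τ ^ 2 - τ ^ 2 * E - τ * t))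
        - (y₁ + c₁ * (τ * (1 - E)) + a₁ * (τ ^ 2 - τ ^ 2 * E - τ * t)) = _
    simp only [c₁, c₂]
    rw [← hE0]
    field_simp
    ring
  refine ⟨hid, ?_⟩
  have key := aux_conv (t / τ) (t₀ / τ) (by positivity)
    (by gcongr)
  have eE : Real.exp (-(t / τ)) = E := by rw [hE, neg_div]
  have eE0 : Real.exp (-(t₀ / τ)) = E0 := by rw [hE0, neg_div]
  rw [eE, eE0] at key
  have hconv : t * (1 - E0) ≤ t₀ * (1 - E) := by
    rw [div_mul_eq_mul_div, div_mul_eq_mul_div, div_le_div_iff₀ hτ hτ] at key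
    nlinarith [key]
  have h1 : 0 ≤ (E - E0) / (1 - E0) * (y₂ - y₁) :=
    mul_nonneg (div_nonneg (by linarith) hD.le) (by linarith)
  have h2 : 0 < (1 - E) / (1 - E0) * (x₂ - x₁) :=
    mul_pos (div_pos (by linarith) hD) (by linarith)
  have h3 : 0 ≤ τ / (1 - E0) * (t₀ - t + t * E0 - t₀ * E) * (a₂ - a₁) :=
    mul_nonneg (mul_nonneg (div_nonneg hτ.le hD.le) (by nlinarith)) (by linarith)
  rw [← sub_pos, hid]
  linarith [h1, h2, h3]
end

section
/- Let t > 0 and τ > 0, and let Δy ≥ 0, Δa ≥ 0, Δc ∈ ℝ. Set D = Δy + Δc·τ(1 − e^{−t/τ}) + Δa·(τ² − τ²e^{−t/τ} − τt) and N = Δc·e^{−t/τ} + Δa·(τe^{−t/τ} − τ). If D > 0, then N/D ≤ 1/t. -/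
/-!
With `E = exp (-t/τ)` and `K = Δc + Δa τ` one has `N = K E - Δa τ` and
`D - t N = Δy + K (τ (1 - E) - t E)`, where `τ (1 - E) - t E ≥ 0` is `1 + t/τ ≤ exp (t/τ)`.
So `t N ≤ D` when `K ≥ 0`, while for `K < 0` already `N < 0`.
-/

open Real

lemma mul_exp_neg_le_one_sub_exp_neg (x : ℝ) : x * exp (-x) ≤ 1 - exp (-x) := by
  have h := mul_le_mul_of_nonneg_right (add_one_le_exp x) (exp_pos (-x)).le
  rw [← exp_add, add_neg_cancel, exp_zero] at h
  linarith

lemma mul_exp_neg_div_le {τ : ℝ} (hτ : 0 < τ) (t : ℝ) :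
    t * exp (-t / τ) ≤ τ * (1 - exp (-t / τ)) := by
  have h := mul_le_mul_of_nonneg_left (mul_exp_neg_le_one_sub_exp_neg (t / τ)) hτ.le
  rw [neg_div]
  rwa [← mul_assoc, mul_div_cancel₀ t hτ.ne'] at h

theorem stmt11 (τ t Δy Δa Δc : ℝ) (hτ : 0 < τ) (ht : 0 < t)
    (hΔy : 0 ≤ Δy) (hΔa : 0 ≤ Δa)
    (hD : 0 < Δy + Δc * (τ * (1 - Real.exp (-t / τ)))
        + Δa * (τ ^ 2 - τ ^ 2 * Real.exp (-t / τ) - τ * t)) :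
    (Δc * Real.exp (-t / τ) + Δa * (τ * Real.exp (-t / τ) - τ)) /
      (Δy + Δc * (τ * (1 - Real.exp (-t / τ)))
        + Δa * (τ ^ 2 - τ ^ 2 * Real.exp (-t / τ) - τ * t)) ≤ 1 / t := by
  set E := exp (-t / τ)
  set K := Δc + Δa * τ
  have hgap : 0 ≤ τ * (1 - E) - t * E := sub_nonneg.mpr (mul_exp_neg_div_le hτ t)
  rw [div_le_div_iff₀ hD ht]
  rcases le_or_gt 0 K with hK | hK
  · have hdiff : Δy + Δc * (τ * (1 - E)) + Δa * (τ ^ 2 - τ ^ 2 * E - τ * t)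
        - (Δc * E + Δa * (τ * E - τ)) * t = Δy + K * (τ * (1 - E) - t * E) := by ring
    linarith [mul_nonneg hK hgap]
  · have hN : Δc * E + Δa * (τ * E - τ) ≤ 0 := by
      have hNK : Δc * E + Δa * (τ * E - τ) = K * E - Δa * τ := by ring
      linarith [mul_neg_of_neg_of_pos hK (exp_pos (-t / τ)), mul_nonneg hΔa hτ.le]
    linarith [mul_nonpos_of_nonpos_of_nonneg hN ht.le]
end
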